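/- Let n be a positive integer and let B be an n×n real matrix that is skew-symmetric (Bᵀ = −B) and such that exp(B/2) − exp(−B/2) is invertible. Then for every vector v ∈ ℝⁿ, ⟨v, B·(1 − exp(−B))⁻¹ v⟩ = (1/2)·⟨v, B·(exp(B/2) + exp(−B/2))·(exp(B/2) − exp(−B/2))⁻¹ v⟩, where ⟨·,·⟩ is the standard inner product on ℝⁿ and exp is the matrix exponential. -/

import Mathlib

open Matrix

/-- For a real skew-symmetric `B` with `exp (B/2) - exp (-B/2)` invertible, the quadratic form
of `B * (1 - exp (-B))⁻¹` equals half that of `B * coth(B/2)`, written via matrix exponentials. -/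
theorem quadratic_form_x_div_one_sub_exp_neg (n : ℕ) (hn : 0 < n)
    (B : Matrix (Fin n) (Fin n) ℝ) (hskew : Bᵀ = -B)
    (h : IsUnit (NormedSpace.exp (B / 2) - NormedSpace.exp (-(B / 2))))
    (v : Fin n → ℝ) :
    v ⬝ᵥ (B * (1 - NormedSpace.exp (-B))⁻¹).mulVec v
      = (1 / 2) * (v ⬝ᵥ (B * (NormedSpace.exp (B / 2) + NormedSpace.exp (-(B / 2)))
          * (NormedSpace.exp (B / 2) - NormedSpace.exp (-(B / 2)))⁻¹).mulVec v) := by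
  -- rewrite the matrix division by 2 as a scalar action
  have h2M : ((1:ℝ) / 2) • (2 : Matrix (Fin n) (Fin n) ℝ) = 1 := by
    have hc : (2 : Matrix (Fin n) (Fin n) ℝ) = ((2:ℕ) : Matrix (Fin n) (Fin n) ℝ) := by
      norm_cast
    rw [hc, ← Matrix.diagonal_natCast, smul_eq_diagonal_mul, diagonal_mul_diagonal]
    ext i j
    simp [Matrix.one_apply, Matrix.diagonal_apply]
  have h2 : B / 2 = ((1:ℝ) / 2) • B := by
    rw [div_eq_mul_inv,
      Matrix.inv_eq_right_inv (show (2 : Matrix (Fin n) (Fin n) ℝ) * (((1:ℝ)/2) • 1) = 1 by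
        rw [mul_smul_comm, mul_one, h2M])]
    rw [mul_smul_comm, mul_one]
  set E := NormedSpace.exp (B / 2) with hE
  set F := NormedSpace.exp (-(B / 2)) with hF
  set S := E - F with hS
  -- basic exponential facts
  have hEmulF : E * F = 1 := by
    rw [hE, hF, ← Matrix.exp_add_of_commute _ _ (Commute.neg_right (Commute.refl (B / 2))),
      add_neg_cancel, NormedSpace.exp_zero]
  have hFmulE : F * E = 1 := by
    rw [hE, hF, ← Matrix.exp_add_of_commute _ _ (Commute.neg_left (Commute.refl (B / 2))),
      neg_add_cancel, NormedSpace.exp_zero]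
  have hexpnegB : NormedSpace.exp (-B) = F * F := by
    rw [hF, ← Matrix.exp_add_of_commute _ _ (Commute.refl _)]
    congr 1
    rw [h2]
    module
  have h1 : (1 : Matrix (Fin n) (Fin n) ℝ) - NormedSpace.exp (-B) = S * F := by
    rw [hexpnegB, hS, sub_mul, hEmulF]
  have hFinv : F⁻¹ = E := Matrix.inv_eq_right_inv hFmulE
  have hSdet : IsUnit S.det := (Matrix.isUnit_iff_isUnit_det S).mp h
  have hSS : S * S⁻¹ = 1 := Matrix.mul_nonsing_inv S hSdet
  have hinv : (1 - NormedSpace.exp (-B))⁻¹ = E * S⁻¹ := by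
    rw [h1, Matrix.mul_inv_rev, hFinv]
  -- the key matrix identity
  have key : B * (E * S⁻¹)
      = (1 / 2 : ℝ) • (B * (E + F) * S⁻¹) + (1 / 2 : ℝ) • B := by
    have hBSS : B * S * S⁻¹ = B := by
      rw [mul_assoc, hSS, mul_one]
    have hmain : (1 / 2 : ℝ) • (B * (E + F) * S⁻¹) + (1 / 2 : ℝ) • (B * S * S⁻¹)
        = B * (E * S⁻¹) := by
      rw [hS, ← smul_add, ← add_mul, ← mul_add]
      have hsum : (E + F) + (E - F) = (2 : ℝ) • E := by module
      rw [hsum, Matrix.mul_smul, Matrix.smul_mul, smul_smul]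
      norm_num [mul_assoc]
    rw [← hmain, hBSS]
  -- quadratic form of skew part vanishes
  have hB0 : v ⬝ᵥ B.mulVec v = 0 := by
    have e1 : v ⬝ᵥ B.mulVec v = Bᵀ.mulVec v ⬝ᵥ v := by
      rw [Matrix.dotProduct_mulVec, ← Matrix.mulVec_transpose]
    rw [hskew, Matrix.neg_mulVec, neg_dotProduct] at e1
    have e2 : B.mulVec v ⬝ᵥ v = v ⬝ᵥ B.mulVec v := dotProduct_comm _ _
    rw [e2] at e1
    linarith
  rw [hinv, key]
  rw [Matrix.add_mulVec, dotProduct_add, Matrix.smul_mulVec,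
    Matrix.smul_mulVec, dotProduct_smul, dotProduct_smul, hB0]
  simp
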